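/- arXiv:1101.2746 — 7 statements merged into one kernel-verified Lean document; each statement's English description precedes it below -/
import Mathlib

section
/- Let R be a commutative ring, let A be the 5×5 matrix Matrix.diagonal ![1,1,1,0,0] over R (the symmetric matrix of the rank-three quadric z₁w₁+z₂w₂+z₃w₃), and let B be an arbitrary 5×5 matrix over R. Consider the polynomial p(t) = det(A + t·B), i.e. the determinant of the matrix over R[t] with entries A i j + t·(B i j). Then the coefficients of p satisfy: coeff 0 of p = 0, coeff 1 of p = 0, and coeff 2 of p = B 3 3 * B 4 4 − B 3 4 * B 4 3 (indices 0-based, i.e. the 2×2 minor of B in the last two rows and columns). Hence the tangent cone of the determinantal hypersurface {det = 0} at the rank-three matrix A is the quadric cone {b₄₄b₅₅ − b₄₅b₅₄ = 0}. -/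
open Polynomial in
theorem tangent_cone_at_rank_three_matrix (R : Type*) [CommRing R]
    (B : Matrix (Fin 5) (Fin 5) R) :
    let A : Matrix (Fin 5) (Fin 5) R := Matrix.diagonal ![1, 1, 1, 0, 0]
    let p : R[X] :=
      Matrix.det (Matrix.of fun i j => C (A i j) + X * C (B i j))
    p.coeff 0 = 0 ∧ p.coeff 1 = 0 ∧
      p.coeff 2 = B 3 3 * B 4 4 - B 3 4 * B 4 3 := by
  intro A p
  set v : Fin 5 → R[X] := fun j => C (B 3 j) with hv
  set w : Fin 5 → R[X] := fun j => C (B 4 j) with hw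
  set N : Matrix (Fin 5) (Fin 5) R[X] :=
    Matrix.of fun i j => if i = 3 then C (B 3 j) else if i = 4 then C (B 4 j)
      else C (A i j) + X * C (B i j) with hN
  have hM : (Matrix.of fun i j => C (A i j) + X * C (B i j)) =
      Matrix.updateRow (Matrix.updateRow N 3 ((X : R[X]) • v)) 4 ((X : R[X]) • w) := by
    ext i j
    by_cases h4 : i = 4
    · subst h4
      simp [hw, hN, A, Matrix.diagonal_apply]
    · rw [Matrix.updateRow_ne h4]
      by_cases h3 : i = 3
      · subst h3
        simp [hv, hN, A, Matrix.diagonal_apply]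
      · rw [Matrix.updateRow_ne h3, hN]
        simp [h3, h4]
  have hw4 : Matrix.updateRow (Matrix.updateRow N 3 ((X : R[X]) • v)) 4 w = Matrix.updateRow N 3 ((X : R[X]) • v) := by
    ext i j
    by_cases h4 : i = 4
    · subst h4
      rw [Matrix.updateRow_self, Matrix.updateRow_ne (by decide)]
      simp [hN, hw]
    · rw [Matrix.updateRow_ne h4]
  have hv3 : Matrix.updateRow N 3 v = N := by
    ext i j
    by_cases h3 : i = 3
    · subst h3; rw [Matrix.updateRow_self]; simp [hN, hv]
    · rw [Matrix.updateRow_ne h3]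
  have hp : p = N.det * X ^ 2 := by
    show (Matrix.of fun i j => C (A i j) + X * C (B i j)).det = _
    rw [hM, Matrix.det_updateRow_smul, hw4, Matrix.det_updateRow_smul, hv3]
    ring
  have hq : N.det.coeff 0 = B 3 3 * B 4 4 - B 3 4 * B 4 3 := by
    rw [coeff_zero_eq_eval_zero,
      show N.det.eval 0 = (evalRingHom 0) N.det from rfl, RingHom.map_det]
    have hE : N.map (evalRingHom 0) =
        !![1, 0, 0, 0, 0; 0, 1, 0, 0, 0; 0, 0, 1, 0, 0;
           B 3 0, B 3 1, B 3 2, B 3 3, B 3 4;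
           B 4 0, B 4 1, B 4 2, B 4 3, B 4 4] := by
      ext i j
      fin_cases i <;> fin_cases j <;>
        simp [hN, A, Matrix.diagonal_apply, Matrix.map_apply]
    rw [RingHom.mapMatrix_apply, hE]
    simp [Matrix.det_succ_row_zero, Fin.sum_univ_succ, Fin.succAbove]
    ring
  refine ⟨?_, ?_, ?_⟩ <;>
    simp [hp, coeff_mul_X_pow', hq]
end

section
/- The set {x ∈ ℂ | ∃ a ∈ ℂ, (1+a)⁵ = −1 and x = −1/a⁵} equals the three-element set {1/32, (11−5√5)/2, (11+5√5)/2}. In particular, for every a ∈ ℂ with (1+a)⁵ = −1, the value x = −1/a⁵ is either 1/32 or a root of x² − 11x − 1 = 0 (equivalently 1 + 11x − x² = 0), and all three values occur. -/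
private lemma aux_zeta (s ζ : ℂ) (hs : s ^ 2 = 1 - s) (hζ : ζ ^ 2 = s * ζ - 1) :
    ζ ^ 5 = 1 ∧ (1 + ζ) ^ 5 = -(8 + 5 * s) := by
  constructor
  · linear_combination (ζ^3 + s*ζ^2 + (s^2-1)*ζ + s^3 - 2*s) * hζ +
      ((s^2-s-1)*ζ + 1 - s) * hs
  · linear_combination (ζ^3 + (s+5)*ζ^2 + (s^2+5*s+9)*ζ + s^3+5*s^2+8*s+5) * hζ +
      ((s^2+4*s+4)*ζ - s - 4) * hs

theorem conifold_points_of_mirror_family :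
    {x : ℂ | ∃ a : ℂ, (1 + a) ^ 5 = -1 ∧ x = -1 / a ^ 5} =
      {1 / 32, (11 - 5 * (Real.sqrt 5 : ℂ)) / 2,
        (11 + 5 * (Real.sqrt 5 : ℂ)) / 2} := by
  set r : ℂ := (Real.sqrt 5 : ℂ) with hrdef
  have hr : r ^ 2 = 5 := by
    rw [hrdef]
    norm_cast
    rw [sq]
    exact_mod_cast Real.mul_self_sqrt (by norm_num)
  ext x
  simp only [Set.mem_setOf_eq, Set.mem_insert_iff, Set.mem_singleton_iff]
  constructor
  · rintro ⟨a, h1, rfl⟩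
    have ha : a ≠ 0 := by
      rintro rfl
      norm_num at h1
    have ha5 : a ^ 5 ≠ 0 := pow_ne_zero 5 ha
    have h1' : a^5 + 5*a^4 + 10*a^3 + 10*a^2 + 5*a + 2 = 0 := by linear_combination h1
    have hnum : a^15 + 21*a^10 - 353*a^5 - 32 = 0 := by
      linear_combination (a^10 - 5*a^9 + 15*a^8 - 35*a^7 + 70*a^6 - 106*a^5
        + 115*a^4 - 70*a^3 - 20*a^2 + 40*a - 16) * h1'
    set x := -1 / a ^ 5 with hx
    have hxa : x * a ^ 5 = -1 := by rw [hx]; field_simp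
    have hfac' : (x - 1/32) * ((x - (11 - 5*r)/2) * (x - (11 + 5*r)/2)) * a^15 = 0 := by
      linear_combination (1/32)*hnum
        + ((x*a^5)^2 - x*a^5 + 1 - (353/32)*a^5*(x*a^5-1) - (21/32)*a^10) * hxa
        + ((x - 1/32)*(-25/4)*a^15) * hr
    have hfac : (x - 1/32) * ((x - (11 - 5*r)/2) * (x - (11 + 5*r)/2)) = 0 :=
      (mul_eq_zero.mp hfac').resolve_right (pow_ne_zero 15 ha)
    rcases mul_eq_zero.mp hfac with h | h
    · left; exact sub_eq_zero.mp h
    · rcases mul_eq_zero.mp h with h' | h'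
      · right; left; exact sub_eq_zero.mp h'
      · right; right; exact sub_eq_zero.mp h'
  · rintro (rfl | rfl | rfl)
    · exact ⟨-2, by norm_num, by norm_num⟩
    · -- x = (11 - 5√5)/2, take s = (r-1)/2
      have hs : ((r-1)/2) ^ 2 = 1 - (r-1)/2 := by linear_combination hr/4
      obtain ⟨w, hw⟩ := IsAlgClosed.exists_pow_nat_eq (((r-1)/2)^2 - 4) (by norm_num : 0 < 2)
      set ζ := ((r-1)/2 + w) / 2 with hζdef
      have hζ : ζ ^ 2 = ((r-1)/2) * ζ - 1 := by
        rw [hζdef]; linear_combination hw / 4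
      obtain ⟨h5, hp⟩ := aux_zeta _ _ hs hζ
      refine ⟨-1 - ζ, ?_, ?_⟩
      · have : (1 + (-1 - ζ)) ^ 5 = -(ζ^5) := by ring
        rw [this, h5]
      · have ha5 : (-1 - ζ) ^ 5 = -(1+ζ)^5 := by ring
        rw [ha5, hp]
        have hpos : (11 + 5*r) ≠ 0 := by
          rw [hrdef]
          intro h
          have : (11 + 5 * Real.sqrt 5 : ℝ) = 0 := by exact_mod_cast h
          nlinarith [Real.sqrt_nonneg 5]
        have h8 : -(-(8 + 5 * ((r-1)/2))) = (11 + 5*r)/2 := by ring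
        rw [h8]
        field_simp
        linear_combination (-25 : ℂ) * hr
    · -- x = (11 + 5√5)/2, take s = -(r+1)/2
      have hs : (-(r+1)/2) ^ 2 = 1 - (-(r+1)/2) := by linear_combination hr/4
      obtain ⟨w, hw⟩ := IsAlgClosed.exists_pow_nat_eq ((-(r+1)/2)^2 - 4) (by norm_num : 0 < 2)
      set ζ := (-(r+1)/2 + w) / 2 with hζdef
      have hζ : ζ ^ 2 = (-(r+1)/2) * ζ - 1 := by
        rw [hζdef]; linear_combination hw / 4
      obtain ⟨h5, hp⟩ := aux_zeta _ _ hs hζ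
      refine ⟨-1 - ζ, ?_, ?_⟩
      · have : (1 + (-1 - ζ)) ^ 5 = -(ζ^5) := by ring
        rw [this, h5]
      · have ha5 : (-1 - ζ) ^ 5 = -(1+ζ)^5 := by ring
        rw [ha5, hp]
        have hpos : (11 - 5*r) ≠ 0 := by
          rw [hrdef]
          intro h
          have h' : (11 - 5 * Real.sqrt 5 : ℝ) = 0 := by exact_mod_cast h
          have : Real.sqrt 5 = 11/5 := by linarith
          nlinarith [Real.sq_sqrt (by norm_num : (5:ℝ) ≥ 0)]
        have h8 : -(-(8 + 5 * (-(r+1)/2))) = (11 - 5*r)/2 := by ring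
        rw [h8]
        field_simp
        linear_combination (-25 : ℂ) * hr
end

section
/- Let 𝖲 be the 4×4 integer matrix with rows (0,0,0,1), (0,0,1,0), (0,−1,0,0), (−1,0,0,0), and let T₀ be the 4×4 integer matrix with rows (1,0,0,0), (1,1,0,0), (17,35,1,0), (−10,−18,−1,1). Then T₀ᵀ · 𝖲 · T₀ = 𝖲, (T₀ − 1)⁴ = 0, and (T₀ − 1)³ ≠ 0; that is, T₀ is an integral symplectic matrix that is maximally unipotent. -/
/-!
`T₀` is lower unitriangular, so its characteristic polynomial is `(X - 1)⁴` and Cayley–Hamilton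
gives `(T₀ - 1)⁴ = 0`. The corner entry of `(T₀ - 1)³` is the product `1 · 35 · (-1)` of the
subdiagonal entries of `T₀`, hence nonzero. The symplectic relation is a direct computation.
-/

open Polynomial

namespace Matrix

variable {n R : Type*} [Fintype n] [LinearOrder n] [CommRing R]

theorem IsLowerTriangular.charpoly_eq_X_sub_one_pow {M : Matrix n n R}
    (hM : M.IsLowerTriangular) (hdiag : ∀ i, M i i = 1) :
    M.charpoly = (X - 1) ^ Fintype.card n := by
  rw [charpoly, det_of_isLowerTriangular _ hM.charmatrix]
  simp [hdiag]

theorem IsLowerTriangular.sub_one_pow_card_eq_zero {M : Matrix n n R}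
    (hM : M.IsLowerTriangular) (hdiag : ∀ i, M i i = 1) :
    (M - 1) ^ Fintype.card n = 0 := by
  simpa [hM.charpoly_eq_X_sub_one_pow hdiag] using M.aeval_self_charpoly

end Matrix

open Matrix in
theorem monodromy_at_zero_maximally_unipotent :
    let S : Matrix (Fin 4) (Fin 4) ℤ :=
      !![0,0,0,1; 0,0,1,0; 0,-1,0,0; -1,0,0,0]
    let T0 : Matrix (Fin 4) (Fin 4) ℤ :=
      !![1,0,0,0; 1,1,0,0; 17,35,1,0; -10,-18,-1,1]
    T0ᵀ * S * T0 = S ∧ (T0 - 1) ^ 4 = 0 ∧ (T0 - 1) ^ 3 ≠ 0 := by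
  intro S T0
  have hT0 : T0.IsLowerTriangular := by decide
  have hdiag : ∀ i, T0 i i = 1 := by decide
  have hcorner : ((T0 - 1) ^ 3 : Matrix (Fin 4) (Fin 4) ℤ) 3 0 = -35 := by decide
  refine ⟨by decide, ?_, fun h => ?_⟩
  · simpa using hT0.sub_one_pow_card_eq_zero hdiag
  · simp [h] at hcorner
end

section
/- Let 𝖲 be the 4×4 integer matrix with rows (0,0,0,1), (0,0,1,0), (0,−1,0,0), (−1,0,0,0), let u = (−4,2,0,−5) ∈ ℤ⁴, and let T̃_{α₁} be the 4×4 integer matrix with rows (−19,0,−8,16), (10,1,4,−8), (0,0,1,0), (−25,0,−10,21). Then T̃_{α₁} = 1 − u·(𝖲·u)ᵀ (the identity minus the rank-one matrix with (i,j)-entry uᵢ·(𝖲u)ⱼ), (T̃_{α₁} − 1)² = 0, and T̃_{α₁}ᵀ · 𝖲 · T̃_{α₁} = 𝖲. Thus T̃_{α₁} is a symplectic Picard–Lefschetz transvection with vanishing cycle u. -/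
open Matrix in
theorem monodromy_tilde_at_alpha1_is_transvection :
    let S : Matrix (Fin 4) (Fin 4) ℤ :=
      !![0,0,0,1; 0,0,1,0; 0,-1,0,0; -1,0,0,0]
    let u : Fin 4 → ℤ := ![-4,2,0,-5]
    let T : Matrix (Fin 4) (Fin 4) ℤ :=
      !![-19,0,-8,16; 10,1,4,-8; 0,0,1,0; -25,0,-10,21]
    T = 1 - Matrix.vecMulVec u (S.mulVec u) ∧ (T - 1) ^ 2 = 0 ∧
      Tᵀ * S * T = S := by
  intro S u T
  have hsub : T - 1 = !![-20,0,-8,16; 10,0,4,-8; 0,0,0,0; -25,0,-10,20] := by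
    ext i j
    fin_cases i <;> fin_cases j <;> rfl
  refine ⟨?_, ?_, ?_⟩
  · ext i j
    fin_cases i <;> fin_cases j <;> rfl
  · rw [hsub, pow_two, ← Matrix.mulᵣ_eq]
    ext i j
    fin_cases i <;> fin_cases j <;> rfl
  · show Tᵀ * S * T = S
    rw [← Matrix.transposeᵣ_eq, ← Matrix.mulᵣ_eq, ← Matrix.mulᵣ_eq]
    rfl
end

section
/- Let S_xz be the 4×4 integer matrix with rows (−2,5,−1,4), (0,2,0,1), (5,−1,3,−3), (0,−5,0,−3). Let the Π-row monodromy matrices be T_{α₁} with rows (11,−14,2,4), (5,−6,1,2), (35,−49,8,14), (−25,35,−5,−9); T₀ with rows (1,0,0,0), (1,1,0,0), (17,35,1,0), (−10,−18,−1,1); T_{1/32} with rows (1,0,0,2), (0,1,0,0), (0,0,1,0), (0,0,0,1); T_{α₂} with rows (1,10,0,4), (0,1,0,0), (0,−25,1,−10), (0,0,0,1); T_∞ with rows (41,−34,12,30), (4,−6,1,2), (−72,51,−22,−56), (−15,18,−4,−9). Let the Π̃-row monodromy matrices be T̃_{α₁} with rows (−19,0,−8,16), (10,1,4,−8), (0,0,1,0),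 (−25,0,−10,21); T̃₀ with rows (−19,170,−8,105), (9,−69,4,−43), (5,−110,1,−65), (−20,145,−9,91); T̃_{1/32} with rows (1,30,0,18), (0,1,0,0), (0,−50,1,−30), (0,0,0,1); T̃_{α₂} with rows (1,0,0,1), (0,1,0,0), (0,0,1,0), (0,0,0,1); T̃_∞ with rows (1,0,0,0), (1,1,0,0), (5,10,1,0), (−5,−5,−1,1). Then for each of the five singular points p ∈ {α₁, 0, 1/32, α₂, ∞} one has the matrix identity T_p · S_xz = S_xz · T̃_p; that is, conjugation by S_xz intertwines the two monodromy representations of Table 1. -/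
open Matrix in
theorem Sxz_intertwines_monodromies :
    let Sxz : Matrix (Fin 4) (Fin 4) ℤ :=
      !![-2,5,-1,4; 0,2,0,1; 5,-1,3,-3; 0,-5,0,-3]
    let Ta1 : Matrix (Fin 4) (Fin 4) ℤ :=
      !![11,-14,2,4; 5,-6,1,2; 35,-49,8,14; -25,35,-5,-9]
    let T0 : Matrix (Fin 4) (Fin 4) ℤ :=
      !![1,0,0,0; 1,1,0,0; 17,35,1,0; -10,-18,-1,1]
    let T32 : Matrix (Fin 4) (Fin 4) ℤ :=
      !![1,0,0,2; 0,1,0,0; 0,0,1,0; 0,0,0,1]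
    let Ta2 : Matrix (Fin 4) (Fin 4) ℤ :=
      !![1,10,0,4; 0,1,0,0; 0,-25,1,-10; 0,0,0,1]
    let Tinf : Matrix (Fin 4) (Fin 4) ℤ :=
      !![41,-34,12,30; 4,-6,1,2; -72,51,-22,-56; -15,18,-4,-9]
    let Tta1 : Matrix (Fin 4) (Fin 4) ℤ :=
      !![-19,0,-8,16; 10,1,4,-8; 0,0,1,0; -25,0,-10,21]
    let Tt0 : Matrix (Fin 4) (Fin 4) ℤ :=
      !![-19,170,-8,105; 9,-69,4,-43; 5,-110,1,-65; -20,145,-9,91]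
    let Tt32 : Matrix (Fin 4) (Fin 4) ℤ :=
      !![1,30,0,18; 0,1,0,0; 0,-50,1,-30; 0,0,0,1]
    let Tta2 : Matrix (Fin 4) (Fin 4) ℤ :=
      !![1,0,0,1; 0,1,0,0; 0,0,1,0; 0,0,0,1]
    let Ttinf : Matrix (Fin 4) (Fin 4) ℤ :=
      !![1,0,0,0; 1,1,0,0; 5,10,1,0; -5,-5,-1,1]
    Ta1 * Sxz = Sxz * Tta1 ∧ T0 * Sxz = Sxz * Tt0 ∧
      T32 * Sxz = Sxz * Tt32 ∧ Ta2 * Sxz = Sxz * Tta2 ∧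
      Tinf * Sxz = Sxz * Ttinf := by
  refine ⟨?_,?_,?_,?_,?_⟩ <;> decide
end

section
/- Let 𝖲 be the 4×4 integer matrix with rows (0,0,0,1), (0,0,1,0), (0,−1,0,0), (−1,0,0,0), and let T̃₀ be the 4×4 integer matrix with rows (−19,170,−8,105), (9,−69,4,−43), (5,−110,1,−65), (−20,145,−9,91). Then T̃₀ᵀ · 𝖲 · T̃₀ = 𝖲, (T̃₀ − 1)⁴ = 0, and (T̃₀ − 1)³ ≠ 0; that is, T̃₀ is an integral symplectic matrix that is maximally unipotent. -/
set_option maxHeartbeats 2000000 in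
open Matrix in
theorem monodromy_tilde_at_zero_maximally_unipotent :
    let S : Matrix (Fin 4) (Fin 4) ℤ :=
      !![0,0,0,1; 0,0,1,0; 0,-1,0,0; -1,0,0,0]
    let T : Matrix (Fin 4) (Fin 4) ℤ :=
      !![-19,170,-8,105; 9,-69,4,-43; 5,-110,1,-65; -20,145,-9,91]
    Tᵀ * S * T = S ∧ (T - 1) ^ 4 = 0 ∧ (T - 1) ^ 3 ≠ 0 := by
  intro S T
  have ht : Tᵀ = !![-19,9,5,-20; 170,-69,-110,145; -8,4,1,-9; 105,-43,-65,91] := by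
    ext i j; fin_cases i <;> fin_cases j <;> rfl
  have hN : T - 1 = !![-20,170,-8,105; 9,-70,4,-43; 5,-110,0,-65; -20,145,-9,90] := by
    ext i j
    fin_cases i <;> fin_cases j <;>
      simp [T, Matrix.sub_apply, Matrix.one_apply, Matrix.vecHead, Matrix.vecTail]
  have hN2 : (T - 1) ^ 2
      = !![-210,805,-105,560; 70,-245,35,-175; 210,-875,105,-595; -140,490,-70,350] := by
    rw [sq, hN]
    ext i j
    fin_cases i <;> fin_cases j <;>
      simp [Matrix.mul_apply, Fin.sum_univ_four, Matrix.vecHead, Matrix.vecTail]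
  refine ⟨?_, ?_, ?_⟩
  · show Tᵀ * S * T = S
    rw [ht]
    ext i j
    fin_cases i <;> fin_cases j <;>
      simp [S, T, Matrix.mul_apply, Fin.sum_univ_four, Matrix.vecHead, Matrix.vecTail]
  · show (T - 1) ^ 4 = 0
    have : (T - 1) ^ 4 = (T - 1) ^ 2 * (T - 1) ^ 2 := by rw [← pow_add]
    rw [this, hN2]
    ext i j
    fin_cases i <;> fin_cases j <;>
      simp [Matrix.mul_apply, Fin.sum_univ_four, Matrix.vecHead, Matrix.vecTail]
  · show (T - 1) ^ 3 ≠ 0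
    intro h
    have h3 : (T - 1) ^ 3 = (T - 1) ^ 2 * (T - 1) := by rw [pow_succ]
    rw [h3, hN2, hN] at h
    have := congrFun (congrFun h 0) 0
    simp [Matrix.mul_apply, Fin.sum_univ_four, Matrix.vecHead, Matrix.vecTail] at this
end

section
/- Let 𝖲 be the 4×4 integer matrix with rows (0,0,0,1), (0,0,1,0), (0,−1,0,0), (−1,0,0,0), and let T_∞ be the 4×4 integer matrix with rows (41,−34,12,30), (4,−6,1,2), (−72,51,−22,−56), (−15,18,−4,−9). Then T_∞ᵀ · 𝖲 · T_∞ = 𝖲, (T_∞ − 1)⁴ = 0, and (T_∞ − 1)³ ≠ 0; that is, T_∞ is an integral symplectic matrix that is maximally unipotent. -/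
/-!
The symplectic identity is a direct computation. For unipotency, `N = T_∞ - 1` has rank-one
cube `N³ = u vᵀ` with `u = (40, 10, -30, -30)`, `v = (3, 3, 1, 4)`, and the row vector
`v` is killed by `N`: hence `N⁴ = u (vᵀ N) = 0`, while `N³ ≠ 0` because `u, v ≠ 0`.
-/

open Matrix in
theorem monodromy_at_infinity_maximally_unipotent :
    let S : Matrix (Fin 4) (Fin 4) ℤ :=
      !![0,0,0,1; 0,0,1,0; 0,-1,0,0; -1,0,0,0]
    let T : Matrix (Fin 4) (Fin 4) ℤ :=
      !![41,-34,12,30; 4,-6,1,2; -72,51,-22,-56; -15,18,-4,-9]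
    Tᵀ * S * T = S ∧ (T - 1) ^ 4 = 0 ∧ (T - 1) ^ 3 ≠ 0 := by
  intro S T
  have hcube : (T - 1) ^ 3 = vecMulVec ![40, 10, -30, -30] ![3, 3, 1, 4] := by decide
  have hkilled : ![3, 3, 1, 4] ᵥ* (T - 1) = 0 := by decide
  refine ⟨by decide, ?_, ?_⟩
  · rw [pow_succ, hcube, vecMulVec_mul, hkilled, vecMulVec_zero]
  · rw [hcube]
    exact vecMulVec_ne_zero (by decide) (by decide)
end
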